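/- arXiv:1710.09802 — 4 statements merged into one kernel-verified Lean document; each statement's English description precedes it below -/
import Mathlib

section
/- For every bounded measurable function f on [0,∞) in the range of I − S, i.e., f = g − Sg for some g ∈ L^∞(ℝ₊), one has M̄₁(f) = 0, where M̄₁(f) = lim_{θ→∞} limsup_{x→∞} (1/θ) ∫ₓ^{x+θ} f(t) dt. More precisely, for any bounded Lipschitz function G with G′ = f a.e., |(1/θ)∫ₓ^{x+θ} f(t)dt| = |G(x+θ)−G(x)|/θ ≤ 2‖G‖_∞/θ. -/
open Filter MeasureTheory Set

noncomputable def Sop (f : ℝ → ℝ) (x : ℝ) : ℝ :=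
  Real.exp (-x) * ∫ t in (0:ℝ)..x, f t * Real.exp t

noncomputable def M1 (f : ℝ → ℝ) : ℝ :=
  limsup (fun θ : ℝ =>
    limsup (fun x : ℝ => (1/θ) * ∫ t in x..(x+θ), f t) atTop) atTop

/-!
`Sg = e^{-x} ∫₀ˣ g eᵗ` is absolutely continuous, and by the Lebesgue differentiation theorem
`(Sg)' = g - Sg` almost everywhere, so the fundamental theorem of calculus for absolutely
continuous functions gives `∫ₓʸ (g - Sg) = Sg y - Sg x`. Since `|Sg| ≤ ‖g‖_∞` on `[0, ∞)`,
every window average of `g - Sg` of length `θ` is at most `2‖g‖_∞ / θ`, which kills `M̄₁`.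
-/

lemma abs_limsup_le_of_eventually_abs_le {α : Type*} {l : Filter α} [l.NeBot] {u : α → ℝ}
    {b : ℝ} (h : ∀ᶠ x in l, |u x| ≤ b) : |limsup u l| ≤ b := by
  have hub : ∀ᶠ x in l, u x ≤ b := h.mono fun _ hx => (abs_le.1 hx).2
  have hlb : ∀ᶠ x in l, -b ≤ u x := h.mono fun _ hx => (abs_le.1 hx).1
  rw [abs_le]
  exact ⟨le_limsup_of_frequently_le hlb.frequently (isBoundedUnder_of_eventually_le hub),
    limsup_le_of_le (isCoboundedUnder_le_of_eventually_le l hlb) hub⟩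

lemma M1_eq_zero_of_abs_average_le {f : ℝ → ℝ} {B : ℝ}
    (h : ∀ θ > (0:ℝ), ∀ x ≥ (0:ℝ), |(1/θ) * ∫ t in x..(x+θ), f t| ≤ B / θ) : M1 f = 0 := by
  refine Tendsto.limsup_eq (squeeze_zero_norm' (a := fun θ => B / θ) ?_
    (tendsto_const_nhds.div_atTop tendsto_id))
  filter_upwards [eventually_gt_atTop 0] with θ hθ
  exact abs_limsup_le_of_eventually_abs_le ((eventually_ge_atTop 0).mono (h θ hθ))

lemma abs_average_le_of_abs_primitive_le {G f : ℝ → ℝ} {D θ x : ℝ}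
    (hG : ∀ y ≥ (0:ℝ), |G y| ≤ D) (hGf : G (x + θ) - G x = ∫ t in x..(x+θ), f t)
    (hθ : 0 < θ) (hx : 0 ≤ x) : |(1/θ) * ∫ t in x..(x+θ), f t| ≤ 2 * D / θ := by
  have hdiff : |G (x + θ) - G x| ≤ 2 * D := by
    have := abs_sub (G (x + θ)) (G x)
    linarith [hG (x + θ) (by linarith), hG x hx]
  rw [← hGf, abs_mul, abs_of_pos (one_div_pos.2 hθ), one_div_mul_eq_div]
  exact div_le_div_of_nonneg_right hdiff hθ.le

section Sop

variable {g : ℝ → ℝ}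

lemma MeasureTheory.LocallyIntegrable.mul_exp (hg : LocallyIntegrable g) :
    LocallyIntegrable (fun t => g t * Real.exp t) :=
  hg.mul_continuous Real.continuous_exp

lemma absolutelyContinuousOnInterval_Sop (hg : LocallyIntegrable g) (a b : ℝ) :
    AbsolutelyContinuousOnInterval (Sop g) a b := by
  set r := |a| + |b|
  have hsub : uIcc a b ⊆ uIcc (-r) r := uIcc_subset_uIcc
    (mem_uIcc.2 (Or.inl (abs_le.1 (le_add_of_nonneg_right (abs_nonneg b)))))
    (mem_uIcc.2 (Or.inl (abs_le.1 (le_add_of_nonneg_left (abs_nonneg a)))))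
  have hr : 0 ≤ r := by positivity
  have hprim : AbsolutelyContinuousOnInterval (fun x => ∫ t in (0:ℝ)..x, g t * Real.exp t)
      (-r) r :=
    (hg.mul_exp.integrableOn_isCompact isCompact_uIcc).intervalIntegrable
      |>.absolutelyContinuousOnInterval_intervalIntegral
      (mem_uIcc.2 (Or.inl ⟨neg_nonpos.2 hr, hr⟩))
  exact ((Real.contDiff_exp.comp contDiff_neg).contDiffOn.absolutelyContinuousOnInterval.mul
    hprim).mono hsub

lemma ae_hasDerivAt_Sop (hg : LocallyIntegrable g) :
    ∀ᵐ x, HasDerivAt (Sop g) (g x - Sop g x) x := by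
  filter_upwards [_root_.LocallyIntegrable.ae_hasDerivAt_integral hg.mul_exp] with x hx
  have hexp : HasDerivAt (fun t => Real.exp (-t)) (-Real.exp (-x)) x := by
    simpa using (hasDerivAt_neg x).exp
  refine (hexp.mul (hx 0)).congr_deriv ?_
  rw [Sop, Real.exp_neg]
  field_simp
  ring

lemma integral_sub_Sop (hg : LocallyIntegrable g) (x y : ℝ) :
    ∫ t in x..y, (g t - Sop g t) = Sop g y - Sop g x := by
  rw [← (absolutelyContinuousOnInterval_Sop hg x y).integral_deriv_eq_sub]
  exact intervalIntegral.integral_congr_ae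
    ((ae_hasDerivAt_Sop hg).mono fun t ht _ => ht.deriv.symm)

lemma abs_Sop_le {C : ℝ} (hgb : ∀ x, |g x| ≤ C) {x : ℝ} (hx : 0 ≤ x) : |Sop g x| ≤ C := by
  have hC : 0 ≤ C := (abs_nonneg (g 0)).trans (hgb 0)
  have hint : |∫ t in (0:ℝ)..x, g t * Real.exp t| ≤ C * (Real.exp x - 1) := by
    have := intervalIntegral.norm_integral_le_of_norm_le (μ := volume) hx
      (ae_of_all _ fun t _ => show ‖g t * Real.exp t‖ ≤ C * Real.exp t by
        rw [Real.norm_eq_abs, abs_mul, Real.abs_exp]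
        exact mul_le_mul_of_nonneg_right (hgb t) (Real.exp_pos t).le)
      ((continuous_const.mul Real.continuous_exp).intervalIntegrable 0 x)
    rwa [intervalIntegral.integral_const_mul, integral_exp, Real.exp_zero] at this
  calc |Sop g x| = Real.exp (-x) * |∫ t in (0:ℝ)..x, g t * Real.exp t| := by
        rw [Sop, abs_mul, Real.abs_exp]
    _ ≤ Real.exp (-x) * (C * (Real.exp x - 1)) := by gcongr
    _ = C - C * Real.exp (-x) := by rw [Real.exp_neg]; field_simp
    _ ≤ C := sub_le_self C (by positivity)

end Sop

/-- If `f = g − Sg` for some bounded measurable `g`, then `M̄₁(f) = 0`; more precisely,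
for any bounded Lipschitz-type primitive `G` of `f`, the window averages of `f` are
bounded by `2‖G‖_∞/θ`. -/
theorem stmt6 (g : ℝ → ℝ) (C : ℝ) (hg : Measurable g) (hgb : ∀ x, |g x| ≤ C) :
    M1 (fun x => g x - Sop g x) = 0 ∧
    (∀ (G f : ℝ → ℝ) (D : ℝ), (∀ x, |G x| ≤ D) →
      (∀ x y : ℝ, 0 ≤ x → x ≤ y → G y - G x = ∫ t in x..y, f t) →
      ∀ θ > (0:ℝ), ∀ x ≥ (0:ℝ),
        |(1/θ) * ∫ t in x..(x+θ), f t| ≤ 2 * D / θ) := by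
  have hgi : LocallyIntegrable g :=
    (locallyIntegrable_const (μ := volume) C).mono hg.aestronglyMeasurable
      (ae_of_all _ fun x => (hgb x).trans (le_abs_self C))
  refine ⟨M1_eq_zero_of_abs_average_le (B := 2 * C) fun θ hθ x hx => ?_,
    fun G f D hGD hGf θ hθ x hx => ?_⟩
  · exact abs_average_le_of_abs_primitive_le (fun y hy => abs_Sop_le hgb hy)
      (integral_sub_Sop hgi x (x + θ)).symm hθ hx
  · exact abs_average_le_of_abs_primitive_le (fun y _ => hGD y)
      (hGf x (x + θ) hx (by linarith)) hθ hx
end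

section
/- For every n ≥ 1, ∫₀^∞ e^{-t} |t^{n-1}/(n-1)! − tⁿ/n!| dt = 2 e^{-n} nⁿ / n!. Consequently, for any bounded measurable g on ℝ, |∫₀^∞ g(−t)e^{-t} t^{n-1}/(n-1)! dt − ∫₀^∞ g(−t)e^{-t} tⁿ/n! dt| ≤ 2‖g‖_∞ e^{-n} nⁿ/n!. -/
/-!
Write `eₖ(t) = e^{-t} tᵏ / k!`. Then `eₖ₊₁' = eₖ - eₖ₊₁`, and since `eₖ₊₁ = t / (k + 1) · eₖ`
this derivative is `≥ 0` on `(0, k + 1]` and `≤ 0` beyond. Integrating `|eₖ - eₖ₊₁|` piecewise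
by the fundamental theorem of calculus, with `eₖ₊₁(0) = 0` and `eₖ₊₁(t) → 0` at infinity, gives
`2 eₖ₊₁(k + 1)`. The bound for `g` is then `|∫ g (eₖ - eₖ₊₁)| ≤ ‖g‖_∞ ∫ |eₖ - eₖ₊₁|`.
-/

open Filter MeasureTheory Set Topology

noncomputable def erlangDensity (k : ℕ) (t : ℝ) : ℝ :=
  Real.exp (-t) * t ^ k / k.factorial

section erlangDensity

variable (k : ℕ)

theorem erlangDensity_succ (t : ℝ) :
    erlangDensity (k + 1) t = t / (k + 1) * erlangDensity k t := by
  unfold erlangDensity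
  rw [Nat.factorial_succ, pow_succ]
  push_cast
  field_simp

variable {k}

theorem erlangDensity_nonneg {t : ℝ} (ht : 0 ≤ t) : 0 ≤ erlangDensity k t := by
  unfold erlangDensity
  positivity

theorem erlangDensity_succ_le {t : ℝ} (ht₀ : 0 ≤ t) (ht : t ≤ k + 1) :
    erlangDensity (k + 1) t ≤ erlangDensity k t := by
  rw [erlangDensity_succ]
  exact mul_le_of_le_one_left (erlangDensity_nonneg ht₀) ((div_le_one (by positivity)).2 ht)

theorem erlangDensity_le_succ {t : ℝ} (ht : k + 1 ≤ t) :
    erlangDensity k t ≤ erlangDensity (k + 1) t := by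
  rw [erlangDensity_succ]
  exact le_mul_of_one_le_left (erlangDensity_nonneg (by linarith))
    ((one_le_div (by positivity)).2 ht)

variable (k)

theorem hasDerivAt_erlangDensity_succ (t : ℝ) :
    HasDerivAt (erlangDensity (k + 1)) (erlangDensity k t - erlangDensity (k + 1) t) t := by
  have h := (((Real.hasDerivAt_exp (-t)).comp t (hasDerivAt_neg t)).mul
    (hasDerivAt_pow (k + 1) t)).div_const ((k + 1).factorial : ℝ)
  refine h.congr_deriv ?_
  unfold erlangDensity
  rw [Nat.factorial_succ, Function.comp_apply, Nat.add_sub_cancel]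
  push_cast
  field_simp
  ring

theorem integrableOn_erlangDensity : IntegrableOn (erlangDensity k) (Ioi 0) := by
  refine IntegrableOn.congr_fun ((Real.GammaIntegral_convergent (s := k + 1)
    (by positivity)).div_const (k.factorial : ℝ)) (fun t _ => ?_) measurableSet_Ioi
  simp [erlangDensity]

theorem tendsto_erlangDensity_atTop : Tendsto (erlangDensity k) atTop (𝓝 0) := by
  unfold erlangDensity
  simpa [mul_comm] using
    (Real.tendsto_pow_mul_exp_neg_atTop_nhds_zero k).div_const (k.factorial : ℝ)

end erlangDensity

theorem integral_Ioi_abs_eq_of_hasDerivAt {F f : ℝ → ℝ} {a m : ℝ} (ham : a ≤ m)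
    (hderiv : ∀ x ∈ Ici a, HasDerivAt F (f x) x) (hf : IntegrableOn f (Ioi a))
    (hf_nonneg : ∀ x ∈ Ioc a m, 0 ≤ f x) (hf_nonpos : ∀ x ∈ Ioi m, f x ≤ 0)
    (hF : Tendsto F atTop (𝓝 0)) :
    ∫ x in Ioi a, |f x| = 2 * F m - F a := by
  have hf_abs : IntegrableOn (fun x => |f x|) (Ioi a) := hf.abs
  have h_left : ∫ x in Ioc a m, |f x| = F m - F a := by
    rw [setIntegral_congr_fun measurableSet_Ioc fun x hx => abs_of_nonneg (hf_nonneg x hx),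
      ← intervalIntegral.integral_of_le ham]
    refine intervalIntegral.integral_eq_sub_of_hasDerivAt
      (fun x hx => hderiv x (by rw [uIcc_of_le ham] at hx; exact hx.1)) ?_
    exact (intervalIntegrable_iff_integrableOn_Ioc_of_le ham).2 (hf.mono_set Ioc_subset_Ioi_self)
  have h_right : ∫ x in Ioi m, |f x| = F m := by
    rw [setIntegral_congr_fun measurableSet_Ioi fun x hx => abs_of_nonpos (hf_nonpos x hx),
      integral_neg, integral_Ioi_of_hasDerivAt_of_tendsto'
        (fun x hx => hderiv x (ham.trans hx)) (hf.mono_set (Ioi_subset_Ioi ham)) hF]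
    ring
  rw [← Ioc_union_Ioi_eq_Ioi ham, setIntegral_union (Ioc_disjoint_Ioi le_rfl) measurableSet_Ioi
    (hf_abs.mono_set Ioc_subset_Ioi_self) (hf_abs.mono_set (Ioi_subset_Ioi ham)), h_left, h_right]
  ring

theorem abs_integral_mul_sub_integral_mul_le {α : Type*} [MeasurableSpace α] {μ : Measure α}
    {φ f₁ f₂ : α → ℝ} {C : ℝ} (hφ_meas : AEStronglyMeasurable φ μ) (hφ : ∀ x, |φ x| ≤ C)
    (hf₁ : Integrable f₁ μ) (hf₂ : Integrable f₂ μ) :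
    |∫ x, φ x * f₁ x ∂μ - ∫ x, φ x * f₂ x ∂μ| ≤ C * ∫ x, |f₁ x - f₂ x| ∂μ := by
  have hφ_bdd : ∀ᵐ x ∂μ, ‖φ x‖ ≤ C := .of_forall hφ
  have h₁ : Integrable (fun x => φ x * f₁ x) μ := hf₁.bdd_mul hφ_meas hφ_bdd
  have h₂ : Integrable (fun x => φ x * f₂ x) μ := hf₂.bdd_mul hφ_meas hφ_bdd
  rw [← integral_sub h₁ h₂,
    ← integral_const_mul C (fun x => |f₁ x - f₂ x|), ← Real.norm_eq_abs]
  refine norm_integral_le_of_norm_le ((hf₁.sub hf₂).abs.const_mul C) (.of_forall fun x => ?_)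
  rw [Real.norm_eq_abs, ← mul_sub, abs_mul]
  exact mul_le_mul_of_nonneg_right (hφ x) (abs_nonneg _)

theorem integral_abs_erlangDensity_sub_succ (k : ℕ) :
    ∫ t in Ioi 0, |erlangDensity k t - erlangDensity (k + 1) t|
      = 2 * erlangDensity (k + 1) (k + 1) := by
  rw [integral_Ioi_abs_eq_of_hasDerivAt (m := k + 1) (by positivity)
    (fun t _ => hasDerivAt_erlangDensity_succ k t)
    ((integrableOn_erlangDensity k).sub (integrableOn_erlangDensity (k + 1)))
    (fun t ht => sub_nonneg.2 (erlangDensity_succ_le ht.1.le ht.2))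
    (fun t ht => sub_nonpos.2 (erlangDensity_le_succ (le_of_lt ht)))
    (tendsto_erlangDensity_atTop (k + 1))]
  simp [erlangDensity]

/-- `∫₀^∞ e^{-t} |t^{n-1}/(n-1)! − tⁿ/n!| dt = 2 e^{-n} nⁿ/n!`, and the resulting
bound for bounded measurable `g`. -/
theorem stmt13 (n : ℕ) (hn : 1 ≤ n) :
    (∫ t in Ioi (0:ℝ),
        Real.exp (-t) * |t ^ (n-1) / (n-1).factorial - t ^ n / n.factorial|)
      = 2 * Real.exp (-(n:ℝ)) * (n:ℝ) ^ n / n.factorial ∧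
    (∀ (g : ℝ → ℝ) (C : ℝ), Measurable g → (∀ x, |g x| ≤ C) →
      |(∫ t in Ioi (0:ℝ), g (-t) * Real.exp (-t) * t ^ (n-1) / (n-1).factorial)
        - ∫ t in Ioi (0:ℝ), g (-t) * Real.exp (-t) * t ^ n / n.factorial|
        ≤ 2 * C * Real.exp (-(n:ℝ)) * (n:ℝ) ^ n / n.factorial) := by
  obtain ⟨k, rfl⟩ := Nat.exists_eq_add_of_le' hn
  have h_abs (t : ℝ) : Real.exp (-t) * |t ^ k / k.factorial - t ^ (k + 1) / (k + 1).factorial|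
      = |erlangDensity k t - erlangDensity (k + 1) t| := by
    rw [← abs_of_pos (Real.exp_pos (-t)), ← abs_mul, erlangDensity, erlangDensity]
    ring_nf
  have h_weight (g : ℝ → ℝ) (j : ℕ) (t : ℝ) :
      g (-t) * Real.exp (-t) * t ^ j / j.factorial = g (-t) * erlangDensity j t := by
    rw [erlangDensity]
    ring
  simp only [Nat.add_sub_cancel, h_abs, h_weight, integral_abs_erlangDensity_sub_succ]
  refine ⟨by rw [erlangDensity]; push_cast; ring, fun g C hg hC => ?_⟩
  calc _ ≤ C * ∫ t in Ioi 0, |erlangDensity k t - erlangDensity (k + 1) t| :=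
        abs_integral_mul_sub_integral_mul_le (hg.comp measurable_neg).aestronglyMeasurable
          (fun t => hC (-t)) (integrableOn_erlangDensity k) (integrableOn_erlangDensity (k + 1))
    _ = _ := by
      rw [integral_abs_erlangDensity_sub_succ, erlangDensity]
      push_cast
      ring
end

section
/- For every bounded measurable f on [0,∞) and every n ≥ 1, ‖Sⁿf − S^{n+1}f‖_∞ ≤ 2‖f‖_∞ e^{-n} nⁿ/n!, where S is the operator (Sg)(x) = e^{-x}∫₀ˣ g(t)eᵗ dt and Sⁿ denotes its n-th iterate. Consequently ‖Sⁿf − S^{n+1}f‖_∞ → 0 as n → ∞, uniformly in f with ‖f‖_∞ ≤ 1. -/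
/-!
Writing `h n s = e⁻ˢ sⁿ / n!`, Cauchy's formula for repeated integration applied to `f(t) eᵗ`
gives `Sⁿ⁺¹ f = ∫₀ˣ f(t) h n (x - t) dt`. Hence `Sⁿ f - Sⁿ⁺¹ f` is `f` convolved with
`h (n-1) - h n = (h n)'`. As `h n` increases on `[0, n]` and decreases afterwards, the `L¹` norm
of its derivative on `[0, x]` is at most `2 h n n = 2 e⁻ⁿ nⁿ / n!`, which tends to `0` by
Stirling's bound `√(2πn) (n/e)ⁿ ≤ n!`.
-/

open Filter MeasureTheory Set

open Function Real intervalIntegral Topology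
open scoped Nat

theorem integral_integral_triangle_swap {E : Type*} [NormedAddCommGroup E] [NormedSpace ℝ E]
    [CompleteSpace E] {F : ℝ → ℝ → E} {x : ℝ} (hx : 0 ≤ x)
    (hF : IntegrableOn (uncurry F) (Ioc 0 x ×ˢ Ioc 0 x)) :
    ∫ t in 0..x, ∫ u in 0..t, F t u = ∫ u in 0..x, ∫ t in u..x, F t u := by
  set G : ℝ → ℝ → E := fun t u => if u ≤ t then F t u else 0
  have hG : IntegrableOn (uncurry G) (Ioc 0 x ×ˢ Ioc 0 x) := by
    have : uncurry G = {p : ℝ × ℝ | p.2 ≤ p.1}.indicator (uncurry F) := by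
      ext ⟨t, u⟩; simp [G, indicator]
    rw [this]
    exact hF.indicator (measurableSet_le measurable_snd measurable_fst)
  have hrow : ∀ t ∈ Ioc 0 x, ∫ u in 0..t, F t u = ∫ u in 0..x, G t u := by
    intro t ht
    have : G t = (Iic t).indicator (F t) := by ext u; simp [G, indicator]
    rw [integral_of_le ht.1.le, integral_of_le hx, this, setIntegral_indicator measurableSet_Iic,
      Ioc_inter_Iic, min_eq_right ht.2]
  have hcol : ∀ u ∈ Ioc 0 x, ∫ t in u..x, F t u = ∫ t in 0..x, G t u := by
    intro u hu
    have : (fun t => G t u) = (Ici u).indicator (fun t => F t u) := by ext t; simp [G, indicator]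
    rw [integral_of_le hu.2, integral_of_le hx, this, setIntegral_indicator measurableSet_Ici,
      show Ioc 0 x ∩ Ici u = Icc u x from Set.ext fun t =>
        ⟨fun h => ⟨h.2, h.1.2⟩, fun h => ⟨⟨hu.1.trans_le h.1, h.2⟩, h.1⟩⟩,
      integral_Icc_eq_integral_Ioc]
  calc ∫ t in 0..x, ∫ u in 0..t, F t u = ∫ t in 0..x, ∫ u in 0..x, G t u := by
        rw [integral_of_le hx, integral_of_le hx]
        exact setIntegral_congr_fun measurableSet_Ioc hrow
    _ = ∫ u in 0..x, ∫ t in 0..x, G t u :=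
        intervalIntegral_intervalIntegral_swap (by rwa [uIoc_of_le hx])
    _ = ∫ u in 0..x, ∫ t in u..x, F t u := by
        rw [integral_of_le hx, integral_of_le hx]
        exact (setIntegral_congr_fun measurableSet_Ioc hcol).symm

theorem integral_integral_mul_pow_div_factorial {g : ℝ → ℝ} {x : ℝ} (hx : 0 ≤ x)
    (hg : IntervalIntegrable g volume 0 x) (n : ℕ) :
    ∫ t in 0..x, ∫ u in 0..t, g u * (t - u) ^ n / n ! =
      ∫ u in 0..x, g u * (x - u) ^ (n + 1) / (n + 1)! := by
  have hint :
      IntegrableOn (uncurry fun t u => g u * ((t - u) ^ n / n !)) (Ioc 0 x ×ˢ Ioc 0 x) := by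
    have hg' : IntegrableOn (fun p : ℝ × ℝ => g p.2) (Ioc 0 x ×ˢ Ioc 0 x) := by
      rw [IntegrableOn, Measure.volume_eq_prod, ← Measure.prod_restrict]
      exact hg.1.comp_snd _
    exact hg'.mul_continuousOn_of_subset (by fun_prop) (measurableSet_Ioc.prod measurableSet_Ioc)
      (isCompact_Icc.prod isCompact_Icc) (prod_mono Ioc_subset_Icc_self Ioc_subset_Icc_self)
  simp only [mul_div_assoc]
  rw [integral_integral_triangle_swap hx hint]
  refine integral_congr fun u _ => ?_
  simp only [intervalIntegral.integral_const_mul, intervalIntegral.integral_div,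
    integral_comp_sub_right (fun s => s ^ n) u, sub_self, integral_pow]
  push_cast [Nat.factorial_succ]
  field_simp
  ring

/-- The paper's kernel `hⁿ⁺¹`, i.e. the density of the `Γ(n + 1, 1)` distribution. -/
noncomputable def erlangKernel (n : ℕ) (s : ℝ) : ℝ := exp (-s) * s ^ n / n !

theorem continuous_erlangKernel (n : ℕ) : Continuous (erlangKernel n) := by
  unfold erlangKernel; fun_prop

theorem erlangKernel_nonneg (n : ℕ) {s : ℝ} (hs : 0 ≤ s) : 0 ≤ erlangKernel n s := by
  unfold erlangKernel; positivity

theorem hasDerivAt_erlangKernel_succ (n : ℕ) (s : ℝ) :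
    HasDerivAt (erlangKernel (n + 1)) (erlangKernel n s - erlangKernel (n + 1) s) s := by
  refine (((hasDerivAt_neg s).exp.mul (hasDerivAt_pow (n + 1) s)).div_const _).congr_deriv ?_
  simp only [erlangKernel, Nat.factorial_succ, Nat.add_sub_cancel]
  push_cast
  field_simp
  ring

theorem erlangKernel_sub_erlangKernel_succ (n : ℕ) (s : ℝ) :
    erlangKernel n s - erlangKernel (n + 1) s = exp (-s) * s ^ n * (n + 1 - s) / (n + 1)! := by
  simp only [erlangKernel, Nat.factorial_succ]
  push_cast
  field_simp
  ring

theorem integral_abs_deriv_le_of_unimodal {g g' : ℝ → ℝ} {a b c : ℝ}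
    (hg : ∀ s, HasDerivAt g (g' s) s) (hg' : Continuous g') (hac : a ≤ c) (hab : a ≤ b)
    (hmono : ∀ s ∈ Icc a c, 0 ≤ g' s) (hanti : ∀ s, c ≤ s → g' s ≤ 0) :
    ∫ s in a..b, |g' s| ≤ 2 * g c - g a - g b := by
  have ftc : ∀ p q, ∫ s in p..q, g' s = g q - g p := fun p q =>
    integral_eq_sub_of_hasDerivAt (fun s _ => hg s) (hg'.intervalIntegrable p q)
  have rise : ∀ q ∈ Icc a c, ∫ s in a..q, |g' s| = g q - g a := fun q hq => by
    rw [← ftc]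
    refine integral_congr fun s hs => abs_of_nonneg (hmono s ?_)
    rw [uIcc_of_le hq.1] at hs
    exact ⟨hs.1, hs.2.trans hq.2⟩
  rcases le_or_gt b c with hbc | hcb
  · have : 0 ≤ g c - g b :=
      ftc b c ▸ integral_nonneg hbc fun s hs => hmono s ⟨hab.trans hs.1, hs.2⟩
    linarith [rise b ⟨hab, hbc⟩]
  · have fall : ∫ s in c..b, |g' s| = g c - g b := by
      rw [← neg_sub, ← ftc, ← intervalIntegral.integral_neg]
      refine integral_congr fun s hs => abs_of_nonpos (hanti s ?_)
      rw [uIcc_of_le hcb.le] at hs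
      exact hs.1
    rw [← integral_add_adjacent_intervals (hg'.abs.intervalIntegrable a c)
      (hg'.abs.intervalIntegrable c b), rise c ⟨hac, le_rfl⟩, fall]
    linarith

theorem integral_abs_erlangKernel_sub_succ_le (n : ℕ) {x : ℝ} (hx : 0 ≤ x) :
    ∫ s in 0..x, |erlangKernel n s - erlangKernel (n + 1) s| ≤
      2 * erlangKernel (n + 1) (n + 1) := by
  have hmono : ∀ s ∈ Icc (0 : ℝ) (n + 1), 0 ≤ erlangKernel n s - erlangKernel (n + 1) s := by
    rintro s ⟨hs0, hsn⟩
    rw [erlangKernel_sub_erlangKernel_succ]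
    have := sub_nonneg.2 hsn
    positivity
  have hanti : ∀ s : ℝ, n + 1 ≤ s → erlangKernel n s - erlangKernel (n + 1) s ≤ 0 := by
    intro s hs
    rw [erlangKernel_sub_erlangKernel_succ]
    have hs0 : 0 ≤ s := le_trans (by positivity) hs
    exact div_nonpos_of_nonpos_of_nonneg
      (mul_nonpos_of_nonneg_of_nonpos (by positivity) (by linarith)) (by positivity)
  have h := integral_abs_deriv_le_of_unimodal (hasDerivAt_erlangKernel_succ n)
    ((continuous_erlangKernel n).sub (continuous_erlangKernel (n + 1))) (by positivity) hx
    hmono hanti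
  have h0 : erlangKernel (n + 1) 0 = 0 := by simp [erlangKernel]
  linarith [erlangKernel_nonneg (n + 1) hx]

theorem Sop_iterate_succ_eq_exp_neg_mul_integral {f : ℝ → ℝ}
    (hf : ∀ x, IntervalIntegrable f volume 0 x) (n : ℕ) {x : ℝ} (hx : 0 ≤ x) :
    Sop^[n + 1] f x = exp (-x) * ∫ t in 0..x, f t * exp t * (x - t) ^ n / n ! := by
  induction n generalizing x with
  | zero => simp [Sop]
  | succ n ih =>
    have hfexp : IntervalIntegrable (fun t => f t * exp t) volume 0 x :=
      (hf x).mul_continuousOn continuous_exp.continuousOn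
    rw [iterate_succ_apply', Sop, ← integral_integral_mul_pow_div_factorial hx hfexp]
    congr 1
    refine integral_congr fun t ht => ?_
    rw [uIcc_of_le hx] at ht
    simp only [ih ht.1, mul_comm (exp (-t)), mul_assoc, ← exp_add, add_neg_cancel, exp_zero,
      mul_one]

theorem Sop_iterate_succ_eq_integral_erlangKernel {f : ℝ → ℝ}
    (hf : ∀ x, IntervalIntegrable f volume 0 x) (n : ℕ) {x : ℝ} (hx : 0 ≤ x) :
    Sop^[n + 1] f x = ∫ t in 0..x, f t * erlangKernel n (x - t) := by
  rw [Sop_iterate_succ_eq_exp_neg_mul_integral hf n hx, ← intervalIntegral.integral_const_mul]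
  refine integral_congr fun t _ => ?_
  simp only [erlangKernel, neg_sub, sub_eq_add_neg t, exp_add]
  ring

theorem abs_integral_mul_comp_sub_le {f k : ℝ → ℝ} {C x : ℝ} (hx : 0 ≤ x)
    (hC : ∀ t, |f t| ≤ C) (hk : Continuous k) :
    |∫ t in 0..x, f t * k (x - t)| ≤ C * ∫ s in 0..x, |k s| := by
  have hbound : ∀ t, |f t * k (x - t)| ≤ C * |k (x - t)| := fun t => by
    rw [abs_mul]; exact mul_le_mul_of_nonneg_right (hC t) (abs_nonneg _)
  have hcont : Continuous fun t => C * |k (x - t)| := by fun_prop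
  calc |∫ t in 0..x, f t * k (x - t)| ≤ ∫ t in 0..x, C * |k (x - t)| :=
        norm_integral_le_of_norm_le (f := fun t => f t * k (x - t)) hx
          (ae_of_all _ fun t _ => hbound t) (hcont.intervalIntegrable 0 x)
    _ = C * ∫ s in 0..x, |k s| := by
        rw [intervalIntegral.integral_const_mul, integral_comp_sub_left (fun s => |k s|),
          sub_self, sub_zero]

theorem abs_Sop_iterate_sub_succ_le {f : ℝ → ℝ} {C : ℝ} (hf : Measurable f)
    (hC : ∀ x, |f x| ≤ C) {n : ℕ} (hn : 1 ≤ n) {x : ℝ} (hx : 0 ≤ x) :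
    |Sop^[n] f x - Sop^[n + 1] f x| ≤ 2 * C * exp (-(n : ℝ)) * (n : ℝ) ^ n / n ! := by
  obtain ⟨m, rfl⟩ : ∃ m, n = m + 1 := ⟨n - 1, by omega⟩
  have hfint : ∀ y, IntervalIntegrable f volume 0 y := fun y =>
    intervalIntegrable_const.mono_fun' hf.aestronglyMeasurable (ae_of_all _ hC)
  have hconv : ∀ k, IntervalIntegrable (fun t => f t * erlangKernel k (x - t)) volume 0 x :=
    fun k => (hfint x).mul_continuousOn
      ((continuous_erlangKernel k).comp (continuous_sub_left x)).continuousOn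
  rw [Sop_iterate_succ_eq_integral_erlangKernel hfint m hx,
    Sop_iterate_succ_eq_integral_erlangKernel hfint (m + 1) hx,
    ← integral_sub (hconv m) (hconv (m + 1))]
  simp only [← mul_sub]
  calc _ ≤ C * ∫ s in 0..x, |erlangKernel m s - erlangKernel (m + 1) s| :=
        abs_integral_mul_comp_sub_le (k := fun s => erlangKernel m s - erlangKernel (m + 1) s)
          hx hC ((continuous_erlangKernel m).sub (continuous_erlangKernel (m + 1)))
    _ ≤ C * (2 * erlangKernel (m + 1) (m + 1)) :=
        mul_le_mul_of_nonneg_left (integral_abs_erlangKernel_sub_succ_le m hx)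
          ((abs_nonneg _).trans (hC 0))
    _ = _ := by simp only [erlangKernel]; push_cast; ring

theorem tendsto_exp_neg_mul_pow_div_factorial :
    Tendsto (fun n : ℕ => exp (-(n : ℝ)) * (n : ℝ) ^ n / n !) atTop (𝓝 0) := by
  have hbound : ∀ᶠ n : ℕ in atTop, exp (-(n : ℝ)) * (n : ℝ) ^ n / n ! ≤ (√(2 * π * n))⁻¹ := by
    filter_upwards [eventually_ge_atTop 1] with n hn
    have hstirling := Stirling.le_factorial_stirling n
    rw [div_pow, exp_one_pow, div_eq_mul_inv, ← exp_neg] at hstirling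
    have : 0 < √(2 * π * n) := by positivity
    rw [div_le_iff₀ (by positivity), inv_mul_eq_div, le_div_iff₀ this]
    linarith
  have hlim : Tendsto (fun n : ℕ => (√(2 * π * n))⁻¹) atTop (𝓝 0) :=
    tendsto_inv_atTop_zero.comp <| tendsto_sqrt_atTop.comp <|
      tendsto_natCast_atTop_atTop.const_mul_atTop (by positivity)
  exact tendsto_of_tendsto_of_tendsto_of_le_of_le' tendsto_const_nhds hlim
    (Eventually.of_forall fun n => by positivity) hbound

/-- `‖Sⁿf − S^{n+1}f‖_∞ ≤ 2‖f‖_∞ e^{-n} nⁿ/n!` on `[0,∞)`, hence the difference of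
consecutive iterates tends to `0` uniformly over `‖f‖_∞ ≤ 1`. -/
theorem stmt15 :
    (∀ (f : ℝ → ℝ) (C : ℝ), Measurable f → (∀ x, |f x| ≤ C) →
      ∀ n : ℕ, 1 ≤ n → ∀ x ≥ (0:ℝ),
        |Sop^[n] f x - Sop^[n+1] f x|
          ≤ 2 * C * Real.exp (-(n:ℝ)) * (n:ℝ) ^ n / n.factorial) ∧
    (∀ ε > (0:ℝ), ∃ N : ℕ, ∀ n ≥ N, ∀ f : ℝ → ℝ, Measurable f →
      (∀ x, |f x| ≤ 1) → ∀ x ≥ (0:ℝ), |Sop^[n] f x - Sop^[n+1] f x| ≤ ε) := by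
  refine ⟨fun f C hf hC n hn x hx => abs_Sop_iterate_sub_succ_le hf hC hn hx, fun ε hε => ?_⟩
  obtain ⟨N, hN⟩ := eventually_atTop.1 <|
    tendsto_exp_neg_mul_pow_div_factorial.eventually_le_const (half_pos hε)
  refine ⟨N + 1, fun n hn f hf hf1 x hx => ?_⟩
  calc |Sop^[n] f x - Sop^[n + 1] f x|
      ≤ 2 * 1 * exp (-(n : ℝ)) * (n : ℝ) ^ n / n ! :=
        abs_Sop_iterate_sub_succ_le hf hf1 (by omega) hx
    _ = 2 * (exp (-(n : ℝ)) * (n : ℝ) ^ n / n !) := by ring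
    _ ≤ ε := by linarith [hN n (by omega)]
end

section
/- With Ēₙ(f) = limsup_{x→∞}(Sⁿf)(x) and Ē_∞(f) = lim_{n→∞} Ēₙ(f), one has Ē_∞(f − Sf) = 0 for every f ∈ L^∞(ℝ₊). More precisely, |Ēₙ(f − Sf)| ≤ ‖Sⁿf − S^{n+1}f‖_∞ ≤ 2‖f‖_∞ e^{-n}nⁿ/n! → 0. -/
/-!
Since `S` is convolution on `[0, ∞)` with `u ↦ e^{-u}`, Cauchy's formula for repeated
integration gives `S^{n+1} f = k_n ⋆ f` with the Gamma kernel `k_n(u) = e^{-u} uⁿ / n!`.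
As `k_n' = k_{n-1} - k_n`, `Sⁿ f - S^{n+1} f = k_n' ⋆ f`, so
`|Sⁿ f - S^{n+1} f| ≤ ‖f‖_∞ ∫₀^∞ |k_n'|`. The kernel `k_n` rises on `[0, n]` and falls
afterwards, so that total variation is `2 k_n(n) = 2 e^{-n} nⁿ / n!`, which is `O(n^{-1/2})`
by Stirling's formula.
-/

open Filter MeasureTheory Set

noncomputable def En (f : ℝ → ℝ) (n : ℕ) : ℝ := limsup (Sop^[n] f) atTop

theorem intervalIntegral_integral_swap_triangle {a b : ℝ} (hab : a ≤ b) {F : ℝ → ℝ → ℝ}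
    (hF : IntegrableOn (Function.uncurry F) (Icc a b ×ˢ Icc a b)) :
    ∫ t in a..b, ∫ s in a..t, F t s = ∫ s in a..b, ∫ t in s..b, F t s := by
  set μ := volume.restrict (Ioc a b)
  set G : ℝ → ℝ → ℝ := fun t s => {p : ℝ × ℝ | p.2 ≤ p.1}.indicator (Function.uncurry F) (t, s)
  have hG : Integrable (Function.uncurry G) (μ.prod μ) := by
    rw [Measure.prod_restrict]
    exact ((hF.mono_set (prod_mono Ioc_subset_Icc_self Ioc_subset_Icc_self)).indicator
      (measurableSet_le measurable_snd measurable_fst))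
  have h_inner_left : ∀ t ∈ Ioc a b, ∫ s in a..t, F t s = ∫ s, G t s ∂μ := by
    intro t ht
    have hG_t : G t = (Iic t).indicator (F t) := by
      ext s; simp [G, indicator_apply]
    rw [hG_t, setIntegral_indicator measurableSet_Iic, Ioc_inter_Iic, min_eq_right ht.2,
      intervalIntegral.integral_of_le ht.1.le]
  have h_inner_right : ∀ s ∈ Ioc a b, ∫ t in s..b, F t s = ∫ t, G t s ∂μ := by
    intro s hs
    have hG_s : (G · s) = (Ici s).indicator (F · s) := by
      ext t; simp [G, indicator_apply]
    have h_section : Ioc a b ∩ Ici s = Icc s b := by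
      ext t
      simp only [mem_inter_iff, mem_Ioc, mem_Ici, mem_Icc]
      exact ⟨fun h => ⟨h.2, h.1.2⟩, fun h => ⟨⟨hs.1.trans_le h.1, h.2⟩, h.1⟩⟩
    rw [hG_s, setIntegral_indicator measurableSet_Ici, h_section, integral_Icc_eq_integral_Ioc,
      intervalIntegral.integral_of_le hs.2]
  rw [intervalIntegral.integral_of_le hab, intervalIntegral.integral_of_le hab,
    setIntegral_congr_fun measurableSet_Ioc h_inner_left,
    setIntegral_congr_fun measurableSet_Ioc h_inner_right]
  exact integral_integral_swap hG

theorem integral_integral_sub_pow_div_factorial_mul {g : ℝ → ℝ} {a b : ℝ} (hab : a ≤ b)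
    (hg : IntegrableOn g (Icc a b)) (n : ℕ) :
    ∫ t in a..b, ∫ s in a..t, (t - s) ^ n / n.factorial * g s
      = ∫ s in a..b, (b - s) ^ (n + 1) / (n + 1).factorial * g s := by
  have hF : IntegrableOn (Function.uncurry fun t s => (t - s) ^ n / n.factorial * g s)
      (Icc a b ×ˢ Icc a b) := by
    refine IntegrableOn.continuousOn_mul (g := fun p : ℝ × ℝ => (p.1 - p.2) ^ n / n.factorial)
      (g' := fun p => g p.2) (by fun_prop) ?_ (isCompact_Icc.prod isCompact_Icc)
    rw [IntegrableOn, Measure.volume_eq_prod, ← Measure.prod_restrict]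
    exact hg.comp_snd _
  rw [intervalIntegral_integral_swap_triangle hab hF]
  refine intervalIntegral.integral_congr fun s _ => ?_
  rw [intervalIntegral.integral_mul_const, intervalIntegral.integral_div,
    intervalIntegral.integral_comp_sub_right (· ^ n), sub_self, integral_pow, Nat.factorial_succ]
  push_cast
  field_simp
  ring

theorem integral_abs_deriv_le_of_sign_change {H d : ℝ → ℝ} {a N x : ℝ}
    (hH : ∀ u, HasDerivAt H (d u) u) (hd : Continuous d) (h_pos : ∀ u ∈ Icc a N, 0 ≤ d u)
    (h_neg : ∀ u, N ≤ u → d u ≤ 0) (haN : a ≤ N) (hax : a ≤ x) :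
    ∫ u in a..x, |d u| ≤ 2 * H N - H a - H x := by
  have hftc : ∀ b c, ∫ u in b..c, d u = H c - H b := fun b c =>
    intervalIntegral.integral_eq_sub_of_hasDerivAt (fun u _ => hH u) (hd.intervalIntegrable b c)
  have h_rising : ∀ b, a ≤ b → b ≤ N → ∫ u in a..b, |d u| = H b - H a := fun b hab hbN => by
    rw [← hftc]
    refine intervalIntegral.integral_congr fun u hu => abs_of_nonneg (h_pos u ?_)
    rw [uIcc_of_le hab] at hu
    exact ⟨hu.1, hu.2.trans hbN⟩
  rcases le_total x N with hxN | hNx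
  · have h_mono : H x ≤ H N := by
      rw [← sub_nonneg, ← hftc]
      exact intervalIntegral.integral_nonneg hxN fun u hu => h_pos u ⟨hax.trans hu.1, hu.2⟩
    rw [h_rising x hax hxN]
    linarith
  · have h_falling : ∫ u in N..x, |d u| = H N - H x := by
      rw [← neg_sub, ← hftc, ← intervalIntegral.integral_neg]
      refine intervalIntegral.integral_congr fun u hu => abs_of_nonpos (h_neg u ?_)
      rw [uIcc_of_le hNx] at hu
      exact hu.1
    rw [← intervalIntegral.integral_add_adjacent_intervals (b := N)
      (hd.abs.intervalIntegrable a N) (hd.abs.intervalIntegrable N x), h_rising N haN le_rfl,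
      h_falling]
    linarith

theorem abs_limsup_le {α : Type*} {l : Filter α} [l.NeBot] {u : α → ℝ} {B : ℝ}
    (h : ∀ᶠ x in l, |u x| ≤ B) : |limsup u l| ≤ B := by
  have h_le : ∀ᶠ x in l, u x ≤ B := h.mono fun x hx => (abs_le.1 hx).2
  have h_ge : ∀ᶠ x in l, -B ≤ u x := h.mono fun x hx => (abs_le.1 hx).1
  have h_bdd : IsBoundedUnder (· ≤ ·) l u := ⟨B, h_le⟩
  have h_bdd' : IsBoundedUnder (· ≥ ·) l u := ⟨-B, h_ge⟩
  exact abs_le.2 ⟨(le_liminf_of_le h_bdd.isCoboundedUnder_ge h_ge).trans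
    (liminf_le_limsup h_bdd h_bdd'), limsup_le_of_le h_bdd'.isCoboundedUnder_le h_le⟩

noncomputable def gammaKernel (n : ℕ) (u : ℝ) : ℝ := Real.exp (-u) * u ^ n / n.factorial

theorem continuous_gammaKernel (n : ℕ) : Continuous (gammaKernel n) := by
  unfold gammaKernel
  fun_prop

theorem gammaKernel_nonneg (n : ℕ) {u : ℝ} (hu : 0 ≤ u) : 0 ≤ gammaKernel n u := by
  unfold gammaKernel
  positivity

theorem gammaKernel_sub_gammaKernel_succ (m : ℕ) (u : ℝ) :
    gammaKernel m u - gammaKernel (m + 1) u = gammaKernel m u * (1 - u / (m + 1)) := by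
  simp only [gammaKernel, Nat.factorial_succ, pow_succ]
  push_cast
  field_simp

theorem hasDerivAt_gammaKernel_succ (m : ℕ) (u : ℝ) :
    HasDerivAt (gammaKernel (m + 1)) (gammaKernel m u - gammaKernel (m + 1) u) u := by
  refine ((((hasDerivAt_neg u).exp).mul (hasDerivAt_pow (m + 1) u)).div_const
    ((m + 1).factorial : ℝ)).congr_deriv ?_
  simp only [gammaKernel, Nat.factorial_succ, Nat.add_sub_cancel]
  push_cast
  field_simp
  ring

theorem integral_abs_gammaKernel_sub_succ_le (m : ℕ) {x : ℝ} (hx : 0 ≤ x) :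
    ∫ u in (0:ℝ)..x, |gammaKernel m u - gammaKernel (m + 1) u|
      ≤ 2 * gammaKernel (m + 1) (m + 1) := by
  have h := integral_abs_deriv_le_of_sign_change (hasDerivAt_gammaKernel_succ m)
    ((continuous_gammaKernel m).sub (continuous_gammaKernel (m + 1)))
    (fun u hu => by
      rw [gammaKernel_sub_gammaKernel_succ]
      refine mul_nonneg (gammaKernel_nonneg m hu.1) ?_
      rw [sub_nonneg, div_le_one (by positivity)]
      exact hu.2)
    (fun u hu => by
      have hu0 : (0:ℝ) ≤ u := le_trans (by positivity) hu
      rw [gammaKernel_sub_gammaKernel_succ]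
      refine mul_nonpos_of_nonneg_of_nonpos (gammaKernel_nonneg m hu0) ?_
      rw [sub_nonpos, le_div_iff₀ (by positivity)]
      linarith)
    (by positivity : (0:ℝ) ≤ m + 1) hx
  have h0 : gammaKernel (m + 1) 0 = 0 := by simp [gammaKernel]
  linarith [gammaKernel_nonneg (m + 1) hx]

theorem gammaKernel_self_le {n : ℕ} (hn : n ≠ 0) :
    gammaKernel n n ≤ (√(2 * Real.pi * n))⁻¹ := by
  have h_stirling := Stirling.le_factorial_stirling n
  rw [div_pow, Real.exp_one_pow] at h_stirling
  calc gammaKernel n n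
      = (√(2 * Real.pi * n))⁻¹ * (√(2 * Real.pi * n) * (n ^ n / Real.exp n) / n.factorial) := by
        rw [gammaKernel, Real.exp_neg]
        field_simp
    _ ≤ (√(2 * Real.pi * n))⁻¹ * 1 := by
        gcongr
        exact div_le_one_of_le₀ h_stirling (by positivity)
    _ = (√(2 * Real.pi * n))⁻¹ := mul_one _

theorem tendsto_gammaKernel_self_atTop :
    Tendsto (fun n : ℕ => gammaKernel n n) atTop (nhds 0) := by
  have h_bound : Tendsto (fun n : ℕ => (√(2 * Real.pi * n))⁻¹) atTop (nhds 0) :=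
    (Real.tendsto_sqrt_atTop.comp
      (tendsto_natCast_atTop_atTop.const_mul_atTop (by positivity))).inv_tendsto_atTop
  refine squeeze_zero' (Eventually.of_forall fun n => gammaKernel_nonneg n n.cast_nonneg) ?_ h_bound
  filter_upwards [eventually_ne_atTop 0] with n hn using gammaKernel_self_le hn

theorem MeasureTheory.LocallyIntegrable.intervalIntegrable_mul_exp {g : ℝ → ℝ}
    (hg : LocallyIntegrable g) (a b : ℝ) :
    IntervalIntegrable (fun t => g t * Real.exp t) volume a b :=
  ((hg.mul_continuous Real.continuous_exp).integrableOn_isCompact isCompact_uIcc).intervalIntegrable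

theorem continuous_sop {g : ℝ → ℝ} (hg : LocallyIntegrable g) : Continuous (Sop g) :=
  (Real.continuous_exp.comp continuous_neg).mul
    (intervalIntegral.continuous_primitive hg.intervalIntegrable_mul_exp 0)

theorem locallyIntegrable_iterate_sop {f : ℝ → ℝ} (hf : LocallyIntegrable f) (n : ℕ) :
    LocallyIntegrable (Sop^[n] f) := by
  induction n with
  | zero => exact hf
  | succ n ih =>
    rw [Function.iterate_succ_apply']
    exact (continuous_sop ih).locallyIntegrable

theorem sop_sub {g h : ℝ → ℝ} (hg : LocallyIntegrable g) (hh : LocallyIntegrable h) :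
    Sop (g - h) = Sop g - Sop h := by
  ext x
  simp only [Sop, Pi.sub_apply, sub_mul, ← mul_sub]
  rw [← intervalIntegral.integral_sub (hg.intervalIntegrable_mul_exp 0 x)
    (hh.intervalIntegrable_mul_exp 0 x)]

theorem iterate_sop_sub {f : ℝ → ℝ} (hf : LocallyIntegrable f) (n : ℕ) :
    Sop^[n] (f - Sop f) = Sop^[n] f - Sop^[n + 1] f := by
  induction n with
  | zero => rfl
  | succ n ih =>
    rw [Function.iterate_succ_apply', ih, sop_sub (locallyIntegrable_iterate_sop hf n)
      (locallyIntegrable_iterate_sop hf (n + 1)), ← Function.iterate_succ_apply' Sop n,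
      ← Function.iterate_succ_apply' Sop (n + 1)]

theorem iterate_sop_succ_apply {f : ℝ → ℝ} (hf : LocallyIntegrable f) (n : ℕ) {x : ℝ}
    (hx : 0 ≤ x) :
    Sop^[n + 1] f x
      = Real.exp (-x) * ∫ t in (0:ℝ)..x, (x - t) ^ n / n.factorial * (f t * Real.exp t) := by
  induction n generalizing x with
  | zero => simp [Sop]
  | succ n ih =>
    have h_inner : ∀ t ∈ uIcc 0 x, Sop^[n + 1] f t * Real.exp t
        = ∫ s in (0:ℝ)..t, (t - s) ^ n / n.factorial * (f s * Real.exp s) := by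
      intro t ht
      rw [uIcc_of_le hx] at ht
      rw [ih ht.1, mul_right_comm, ← Real.exp_add, neg_add_cancel, Real.exp_zero, one_mul]
    rw [Function.iterate_succ_apply', Sop, intervalIntegral.integral_congr h_inner,
      integral_integral_sub_pow_div_factorial_mul hx
        ((hf.mul_continuous Real.continuous_exp).integrableOn_isCompact isCompact_Icc)]

theorem iterate_sop_succ_eq_integral_gammaKernel {f : ℝ → ℝ} (hf : LocallyIntegrable f) (n : ℕ)
    {x : ℝ} (hx : 0 ≤ x) :
    Sop^[n + 1] f x = ∫ t in (0:ℝ)..x, gammaKernel n (x - t) * f t := by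
  rw [iterate_sop_succ_apply hf n hx, ← intervalIntegral.integral_const_mul]
  refine intervalIntegral.integral_congr fun t _ => ?_
  rw [gammaKernel, neg_sub, Real.exp_sub, Real.exp_neg]
  field_simp

theorem abs_iterate_sop_sub_iterate_sop_succ_le {f : ℝ → ℝ} {C : ℝ} (hf : LocallyIntegrable f)
    (hbd : ∀ x, |f x| ≤ C) (m : ℕ) {x : ℝ} (hx : 0 ≤ x) :
    |Sop^[m + 1] f x - Sop^[m + 2] f x|
      ≤ C * ∫ u in (0:ℝ)..x, |gammaKernel m u - gammaKernel (m + 1) u| := by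
  have h_int : ∀ n, IntervalIntegrable (fun t => gammaKernel n (x - t) * f t) volume 0 x :=
    fun n => ((hf.continuous_mul ((continuous_gammaKernel n).comp
      (continuous_sub_left x))).integrableOn_isCompact isCompact_uIcc).intervalIntegrable
  rw [iterate_sop_succ_eq_integral_gammaKernel hf m hx,
    iterate_sop_succ_eq_integral_gammaKernel hf (m + 1) hx,
    ← intervalIntegral.integral_sub (h_int m) (h_int (m + 1))]
  calc |∫ t in (0:ℝ)..x, gammaKernel m (x - t) * f t - gammaKernel (m + 1) (x - t) * f t|
      ≤ ∫ t in (0:ℝ)..x, |gammaKernel m (x - t) - gammaKernel (m + 1) (x - t)| * C := by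
        rw [← Real.norm_eq_abs]
        refine intervalIntegral.norm_integral_le_of_norm_le hx (ae_of_all _ fun t _ => ?_) ?_
        · rw [← sub_mul, Real.norm_eq_abs, abs_mul]
          exact mul_le_mul_of_nonneg_left (hbd t) (abs_nonneg _)
        · exact (((continuous_gammaKernel m).sub (continuous_gammaKernel (m + 1))).comp
            (continuous_sub_left x)).abs.mul continuous_const |>.intervalIntegrable 0 x
    _ = C * ∫ u in (0:ℝ)..x, |gammaKernel m u - gammaKernel (m + 1) u| := by
        rw [intervalIntegral.integral_mul_const, mul_comm,
          intervalIntegral.integral_comp_sub_left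
            (fun u => |gammaKernel m u - gammaKernel (m + 1) u|), sub_self, sub_zero]

/-- `Ē_∞(f − Sf) = 0`: precisely, `|Ēₙ(f − Sf)| ≤ 2‖f‖_∞ e^{-n} nⁿ/n!` and
`Ēₙ(f − Sf) → 0` as `n → ∞`. -/
theorem stmt17 (f : ℝ → ℝ) (C : ℝ) (hf : Measurable f) (hbd : ∀ x, |f x| ≤ C) :
    (∀ n : ℕ, 1 ≤ n →
      |En (fun x => f x - Sop f x) n|
        ≤ 2 * C * Real.exp (-(n:ℝ)) * (n:ℝ) ^ n / n.factorial) ∧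
    Tendsto (fun n : ℕ => En (fun x => f x - Sop f x) n) atTop (nhds 0) := by
  have hC : 0 ≤ C := (abs_nonneg _).trans (hbd 0)
  have hf_loc : LocallyIntegrable f :=
    (memLp_top_of_bound hf.aestronglyMeasurable C (ae_of_all _ hbd)).locallyIntegrable le_top
  have h_bound : ∀ n : ℕ, 1 ≤ n →
      |En (fun x => f x - Sop f x) n| ≤ 2 * C * gammaKernel n n := by
    intro n hn
    obtain ⟨m, rfl⟩ := Nat.exists_eq_add_of_le' hn
    refine abs_limsup_le ?_
    filter_upwards [eventually_ge_atTop 0] with x hx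
    rw [show (fun x => f x - Sop f x) = f - Sop f from rfl, iterate_sop_sub hf_loc, Pi.sub_apply]
    calc _ ≤ C * ∫ u in (0:ℝ)..x, |gammaKernel m u - gammaKernel (m + 1) u| :=
          abs_iterate_sop_sub_iterate_sop_succ_le hf_loc hbd m hx
      _ ≤ C * (2 * gammaKernel (m + 1) (m + 1)) :=
          mul_le_mul_of_nonneg_left (integral_abs_gammaKernel_sub_succ_le m hx) hC
      _ = 2 * C * gammaKernel (m + 1) ↑(m + 1) := by push_cast; ring
  refine ⟨fun n hn => (h_bound n hn).trans_eq (by rw [gammaKernel]; ring), ?_⟩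
  refine squeeze_zero_norm' ((eventually_ge_atTop 1).mono h_bound) ?_
  simpa using tendsto_gammaKernel_self_atTop.const_mul (2 * C)
end
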